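/- arXiv:1201.3274 — 5 statements merged into one kernel-verified Lean document; each statement's English description precedes it below -/
import Mathlib

section
/- Let p, q be positive integers and let G := (ℤ/pℤ) * (ℤ/qℤ) be the free product of the cyclic groups of orders p and q. Then every surjective group homomorphism φ : G → G is an isomorphism. -/
/-!
A finitely generated residually finite group is Hopfian (Mal'cev): if `φ` is surjective and
`φ g = 1`, then precomposition with `φ` is an injective, hence bijective, self-map of the finite
set of homomorphisms from the group to any finite group `Q`, so every homomorphism to `Q` kills `g`.

A free product of finite groups is residually finite: an element whose reduced word has length `n`
acts nontrivially on the finite set of reduced words of length at most `n`, on which each factor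
acts by left multiplication, truncated to the identity whenever the result could be too long.
For `p, q > 0`, `ℤ/pℤ ∗ ℤ/qℤ` is such a free product, and it is generated by its two factors.
-/

open Function Monoid

section Hopfian

variable {G : Type*} [Group G]

instance MonoidHom.finite_of_fg {P : Type*} [Monoid P] [Finite P] [Group.FG G] :
    Finite (G →* P) := by
  obtain ⟨S, hS, hSfin⟩ := Group.fg_iff.mp ‹Group.FG G›
  have := hSfin.to_subtype
  exact Finite.of_injective (fun f : G →* P => fun s : S => f s)
    fun f g hfg => MonoidHom.eq_of_eqOn_dense hS fun s hs => congrFun hfg ⟨s, hs⟩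

theorem Group.ResiduallyFinite.injective_of_surjective [Group.FG G] [Group.ResiduallyFinite G]
    {φ : G →* G} (hφ : Surjective φ) : Injective φ := by
  refine (injective_iff_map_eq_one φ).mpr fun g hg => ?_
  by_contra hg1
  obtain ⟨H, hgH⟩ := Group.exists_finiteIndexNormalSubgroup_notMem g hg1
  have hcomp : Injective fun ψ : G →* G ⧸ H.toSubgroup => ψ.comp φ :=
    fun _ _ h => (MonoidHom.cancel_right hφ).mp h
  obtain ⟨ψ, hψ⟩ := Finite.surjective_of_injective hcomp (QuotientGroup.mk' H.toSubgroup)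
  apply hgH
  rw [← H.mem_toSubgroup_iff, ← QuotientGroup.eq_one_iff, ← QuotientGroup.mk'_apply, ← hψ]
  simp [hg]

theorem Group.ResiduallyFinite.of_injective {H : Type*} [Group H] [Group.ResiduallyFinite H]
    {f : G →* H} (hf : Injective f) : Group.ResiduallyFinite G := by
  refine Group.residuallyFinite_of_forall_exists_finite_monoidHom fun g hg => ?_
  obtain ⟨K, hK⟩ :=
    Group.exists_finiteIndexNormalSubgroup_notMem (f g) ((map_ne_one_iff f hf).mpr hg)
  refine ⟨H ⧸ K.toSubgroup, inferInstance, inferInstance, (QuotientGroup.mk' _).comp f, ?_⟩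
  simpa [QuotientGroup.eq_one_iff, K.mem_toSubgroup_iff] using hK

end Hopfian

namespace Monoid.CoprodI.Word

variable {ι : Type*} {M : ι → Type*} [∀ i, Monoid (M i)] [∀ i, DecidableEq (M i)]

theorem length_rcons_le {i : ι} (p : Pair M i) :
    (rcons p).toList.length ≤ p.tail.toList.length + 1 := by
  unfold rcons
  split <;> simp [cons]

variable [DecidableEq ι]

variable (M) in
abbrev Bounded (n : ℕ) : Type _ :=
  {w : Word M // w.toList.length ≤ n}

instance [Finite ι] [∀ i, Finite (M i)] (n : ℕ) : Finite (Bounded M n) :=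
  have : Finite {l : List (Σ i, M i) // l.length ≤ n} :=
    (List.finite_length_le (Σ i, M i) n).to_subtype
  Finite.of_injective (fun w : Bounded M n => (⟨w.1.toList, w.2⟩ : {l : List _ // l.length ≤ n}))
    fun _ _ h => Subtype.ext (Word.ext (congrArg Subtype.val h))

/-- `m • w` if this cannot be longer than `n`, and `w` otherwise. The condition only depends on
`(equivPair i w).tail`, which `M i` does not move, so this is again an action of `M i`. -/
def truncSMul (n : ℕ) {i : ι} (m : M i) (w : Word M) : Word M :=
  if (equivPair i w).tail.toList.length < n then m • w else w

theorem equivPair_tail_truncSMul (n : ℕ) {i : ι} (m : M i) (w : Word M) :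
    (equivPair i (truncSMul n m w)).tail = (equivPair i w).tail := by
  unfold truncSMul
  split
  · rw [smul_eq_of_smul, equivPair_smul_same]
  · rfl

theorem length_truncSMul_le {n : ℕ} {i : ι} (m : M i) {w : Word M}
    (hw : w.toList.length ≤ n) : (truncSMul n m w).toList.length ≤ n := by
  unfold truncSMul
  split
  · exact (length_rcons_le _).trans (by assumption)
  · exact hw

theorem truncSMul_one (n : ℕ) (i : ι) (w : Word M) : truncSMul n (1 : M i) w = w := by
  unfold truncSMul
  split <;> simp

theorem truncSMul_mul (n : ℕ) {i : ι} (m m' : M i) (w : Word M) :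
    truncSMul n (m * m') w = truncSMul n m (truncSMul n m' w) := by
  rw [truncSMul.eq_1 n m (truncSMul n m' w), equivPair_tail_truncSMul]
  unfold truncSMul
  split <;> simp [mul_smul]

instance (n : ℕ) (i : ι) : MulAction (M i) (Bounded M n) where
  smul m w := ⟨truncSMul n m w.1, length_truncSMul_le m w.2⟩
  one_smul w := Subtype.ext (truncSMul_one n i w.1)
  mul_smul m m' w := Subtype.ext (truncSMul_mul n m m' w.1)

instance (n : ℕ) : MulAction (CoprodI M) (Bounded M n) :=
  MulAction.ofEndHom (lift fun _ => MulAction.toEndHom)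

theorem prod_smul_bounded_empty {n : ℕ} (w : Word M) (hw : w.toList.length ≤ n) :
    w.prod • (⟨empty, Nat.zero_le n⟩ : Bounded M n) = ⟨w, hw⟩ := by
  induction w using consRecOn with
  | empty => exact one_smul _ _
  | cons i m w hfst hm ih =>
    have hlen : w.toList.length < n := by simpa [cons] using hw
    rw [prod_cons, mul_smul, ih hlen.le]
    refine Subtype.ext ?_
    change truncSMul n m w = cons m w hfst hm
    rw [truncSMul, equivPair_eq_of_fstIdx_ne hfst, if_pos hlen, cons_eq_smul, smul_eq_of_smul]

end Monoid.CoprodI.Word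

instance Monoid.CoprodI.residuallyFinite {ι : Type*} [Finite ι] {G : ι → Type*}
    [∀ i, Group (G i)] [∀ i, Finite (G i)] : Group.ResiduallyFinite (CoprodI G) := by
  classical
  refine Group.residuallyFinite_of_forall_exists_finite_monoidHom fun g hg => ?_
  set w := Word.equiv g
  refine ⟨Equiv.Perm (Word.Bounded G w.toList.length), inferInstance, inferInstance,
    MulAction.toPermHom _ _, fun hfix => hg ?_⟩
  have hprod : w.prod = g := Word.equiv.symm_apply_apply g
  have hw : (⟨w, le_rfl⟩ : Word.Bounded G w.toList.length) = ⟨Word.empty, Nat.zero_le _⟩ := by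
    rw [← Word.prod_smul_bounded_empty w le_rfl, hprod]
    exact congrArg (fun σ : Equiv.Perm _ => σ ⟨Word.empty, Nat.zero_le _⟩) hfix
  exact Word.equiv.injective
    ((congrArg Subtype.val hw).trans (one_smul (CoprodI G) Word.empty).symm)

namespace Monoid.Coprod

instance {G H : Type*} [Group G] [Group H] [Group.FG G] [Group.FG H] : Group.FG (G ∗ H) := by
  rw [Group.fg_def, ← range_inl_sup_range_inr]
  exact .sup ((Group.fg_iff_subgroup_fg _).mp inferInstance)
    ((Group.fg_iff_subgroup_fg _).mp inferInstance)

universe u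

variable {G H : Type u} [Group G] [Group H]

abbrev boolFamily (G H : Type u) : Bool → Type u := fun b => cond b G H

instance : ∀ b, Group (boolFamily G H b)
  | true => ‹Group G›
  | false => ‹Group H›

instance [Finite G] [Finite H] : ∀ b, Finite (boolFamily G H b)
  | true => ‹Finite G›
  | false => ‹Finite H›

def toCoprodI : G ∗ H →* CoprodI (boolFamily G H) :=
  lift (CoprodI.of : boolFamily G H true →* _) (CoprodI.of : boolFamily G H false →* _)

def ofCoprodI : CoprodI (boolFamily G H) →* G ∗ H :=
  CoprodI.lift fun b => match b with
    | true => inl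
    | false => inr

theorem ofCoprodI_comp_toCoprodI : ofCoprodI.comp toCoprodI = MonoidHom.id (G ∗ H) := by
  ext <;> simp [toCoprodI, ofCoprodI]

theorem toCoprodI_injective : Injective (toCoprodI : G ∗ H →* _) :=
  LeftInverse.injective (g := ofCoprodI) (DFunLike.congr_fun ofCoprodI_comp_toCoprodI)

instance [Finite G] [Finite H] : Group.ResiduallyFinite (G ∗ H) :=
  .of_injective toCoprodI_injective

end Monoid.Coprod

/-- Every surjective endomorphism of the free product
`(ℤ/pℤ) * (ℤ/qℤ)` is an isomorphism. -/
theorem stmt_5 (p q : ℕ) (hp : 0 < p) (hq : 0 < q)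
    (φ : Monoid.Coprod (Multiplicative (ZMod p)) (Multiplicative (ZMod q)) →*
         Monoid.Coprod (Multiplicative (ZMod p)) (Multiplicative (ZMod q)))
    (hφ : Function.Surjective φ) : Function.Bijective φ := by
  have : NeZero p := ⟨hp.ne'⟩
  have : NeZero q := ⟨hq.ne'⟩
  exact ⟨Group.ResiduallyFinite.injective_of_surjective hφ, hφ⟩
end

section
/- Let G be a group, φ : G → G a group automorphism, and a, b positive integers with gcd(a,b) = 1. Then the normal closure in G of the set { g⁻¹ · φ^a(g) : g ∈ G } ∪ { g⁻¹ · φ^b(g) : g ∈ G } equals the normal closure in G of the set { g⁻¹ · φ(g) : g ∈ G }. -/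
section Aux

variable {G : Type*} [Group G] (φ : MulAut G) (N : Subgroup G)

private lemma aux_add {m n : ℕ} (hm : ∀ g : G, g⁻¹ * (φ ^ m) g ∈ N)
    (hn : ∀ g : G, g⁻¹ * (φ ^ n) g ∈ N) : ∀ g : G, g⁻¹ * (φ ^ (m + n)) g ∈ N := by
  intro g
  have h1 : (φ ^ (m + n)) g = (φ ^ n) ((φ ^ m) g) := by
    rw [add_comm, pow_add]; rfl
  have h2 : g⁻¹ * (φ ^ (m + n)) g =
      (g⁻¹ * (φ ^ m) g) * (((φ ^ m) g)⁻¹ * (φ ^ n) ((φ ^ m) g)) := by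
    rw [h1]; group
  rw [h2]
  exact mul_mem (hm g) (hn _)

private lemma aux_sub {m n : ℕ} (hle : n ≤ m) (hm : ∀ g : G, g⁻¹ * (φ ^ m) g ∈ N)
    (hn : ∀ g : G, g⁻¹ * (φ ^ n) g ∈ N) : ∀ g : G, g⁻¹ * (φ ^ (m - n)) g ∈ N := by
  intro g
  have h1 : (φ ^ m) g = (φ ^ n) ((φ ^ (m - n)) g) := by
    conv_lhs => rw [← Nat.sub_add_cancel hle, add_comm, pow_add]
    rfl
  have h2 : g⁻¹ * (φ ^ (m - n)) g =
      (g⁻¹ * (φ ^ m) g) * (((φ ^ (m - n)) g)⁻¹ * (φ ^ n) ((φ ^ (m - n)) g))⁻¹ := by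
    rw [h1]; group
  rw [h2]
  exact mul_mem (hm g) (inv_mem (hn _))

private lemma aux_mul {m : ℕ} (hm : ∀ g : G, g⁻¹ * (φ ^ m) g ∈ N) (k : ℕ) :
    ∀ g : G, g⁻¹ * (φ ^ (k * m)) g ∈ N := by
  induction k with
  | zero => intro g; simpa using one_mem N
  | succ k ih =>
      have := aux_add φ N ih hm
      simpa [Nat.succ_mul] using this

private lemma aux_gcd : ∀ m n : ℕ, (∀ g : G, g⁻¹ * (φ ^ m) g ∈ N) →
    (∀ g : G, g⁻¹ * (φ ^ n) g ∈ N) → ∀ g : G, g⁻¹ * (φ ^ Nat.gcd m n) g ∈ N := by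
  intro m n
  induction m, n using Nat.gcd.induction with
  | H0 n => intro _ hn; simpa using hn
  | H1 m n hm ih =>
      intro hmm hnn
      have hdiv := Nat.mod_add_div' n m
      have hle : n / m * m ≤ n := by omega
      have heq : n % m = n - n / m * m := by omega
      have hmod : ∀ g : G, g⁻¹ * (φ ^ (n % m)) g ∈ N := by
        rw [heq]
        exact aux_sub φ N hle hnn (aux_mul φ N hmm (n / m))
      rw [Nat.gcd_rec]
      exact ih hmod hmm

end Aux

/-- For a group automorphism `φ : G → G` and coprime positive
integers `a, b`, the normal closure of
`{g⁻¹ * φ^a g : g ∈ G} ∪ {g⁻¹ * φ^b g : g ∈ G}` equals the normal closure of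
`{g⁻¹ * φ g : g ∈ G}`. -/
theorem stmt_7 (G : Type*) [Group G] (φ : MulAut G) (a b : ℕ)
    (ha : 0 < a) (hb : 0 < b) (hab : Nat.gcd a b = 1) :
    Subgroup.normalClosure
        ({x | ∃ g : G, x = g⁻¹ * (φ ^ a) g} ∪ {x | ∃ g : G, x = g⁻¹ * (φ ^ b) g}) =
      Subgroup.normalClosure {x | ∃ g : G, x = g⁻¹ * φ g} := by
  set N₁ := Subgroup.normalClosure {x | ∃ g : G, x = g⁻¹ * φ g} with hN₁
  set N₂ := Subgroup.normalClosure
      ({x | ∃ g : G, x = g⁻¹ * (φ ^ a) g} ∪ {x | ∃ g : G, x = g⁻¹ * (φ ^ b) g}) with hN₂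
  have h1 : ∀ g : G, g⁻¹ * (φ ^ 1) g ∈ N₁ := by
    intro g
    apply Subgroup.subset_normalClosure
    exact ⟨g, by simp⟩
  have hall : ∀ n : ℕ, ∀ g : G, g⁻¹ * (φ ^ n) g ∈ N₁ := by
    intro n
    induction n with
    | zero => intro g; simpa using one_mem N₁
    | succ n ih => simpa using aux_add φ N₁ ih h1
  have hA : ∀ g : G, g⁻¹ * (φ ^ a) g ∈ N₂ := fun g =>
    Subgroup.subset_normalClosure (Or.inl ⟨g, rfl⟩)
  have hB : ∀ g : G, g⁻¹ * (φ ^ b) g ∈ N₂ := fun g =>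
    Subgroup.subset_normalClosure (Or.inr ⟨g, rfl⟩)
  have hG : ∀ g : G, g⁻¹ * φ g ∈ N₂ := by
    intro g
    have := aux_gcd φ N₂ a b hA hB g
    rwa [hab, pow_one] at this
  apply le_antisymm
  · apply Subgroup.normalClosure_le_normal
    rintro x (⟨g, rfl⟩ | ⟨g, rfl⟩)
    · exact hall a g
    · exact hall b g
  · apply Subgroup.normalClosure_le_normal
    rintro x ⟨g, rfl⟩
    exact hG g
end

section
/- Let m, a, b be positive integers, and set N := 2m+1 and d := a+b. Let F(x,y,z) := x^{aN} y^{bN} + (x^N + y^N + x^m y^m z)^d ∈ ℂ[x,y,z]. Then for every t ∈ ℂ with t ≠ 0, the set { z ∈ ℂ : F(1, t, z) = 0 } has exactly d elements. (Equivalently: every line y = t x with t ≠ 0, ∞ through the point P = [0:0:1] meets the curve F = 0 in exactly d points outside P.) -/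
/-!
On the line `x = 1, y = t`, `F(1, t, z) = t^{bN} + w^d` with `w = 1 + t^N + t^m z`, an invertible
affine function of `z` since `t ≠ 0`. So the zeros correspond to the `d`-th roots of `-t^{bN} ≠ 0`,
of which there are exactly `d` in `ℂ`.
-/

open MvPolynomial

theorem IsPrimitiveRoot.ncard_pow_eq {R : Type*} [CommRing R] [IsDomain R] {n : ℕ} {ζ : R}
    (hζ : IsPrimitiveRoot ζ n) (hn : 0 < n) {c : R} (hc : c ≠ 0) (hroot : ∃ α, α ^ n = c) :
    {w : R | w ^ n = c}.ncard = n := by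
  classical
  have hset : {w : R | w ^ n = c} = (Polynomial.nthRoots n c).toFinset := by
    ext w
    simp [Polynomial.mem_nthRoots hn]
  rw [hset, Set.ncard_coe_finset, Multiset.toFinset_card_of_nodup (hζ.nthRoots_nodup hc),
    hζ.card_nthRoots, if_pos hroot]

theorem Complex.ncard_pow_eq {n : ℕ} (hn : 0 < n) {c : ℂ} (hc : c ≠ 0) :
    {w : ℂ | w ^ n = c}.ncard = n :=
  (Complex.isPrimitiveRoot_exp n hn.ne').ncard_pow_eq hn hc (IsAlgClosed.exists_pow_nat_eq c hn)

theorem Set.ncard_preimage_affine {K : Type*} [Field K] (α : K) {β : K} (hβ : β ≠ 0)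
    (s : Set K) : ((fun z ↦ α + β * z) ⁻¹' s).ncard = s.ncard :=
  Set.ncard_preimage_of_injective_subset_range
    (fun _ _ h ↦ mul_left_cancel₀ hβ (add_left_cancel h))
    (fun w _ ↦ ⟨(w - α) / β, by field_simp; ring⟩)

theorem stmt_8_general (m a b N d : ℕ) (ha : 0 < a)
    (hd : d = a + b)
    (F : MvPolynomial (Fin 3) ℂ)
    (hF : F = X 0 ^ (a * N) * X 1 ^ (b * N) +
      (X 0 ^ N + X 1 ^ N + X 0 ^ m * X 1 ^ m * X 2) ^ d)
    (t : ℂ) (ht : t ≠ 0) :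
    Set.ncard {z : ℂ | MvPolynomial.eval ![1, t, z] F = 0} = d := by
  have hline : {z : ℂ | MvPolynomial.eval ![1, t, z] F = 0} =
      (fun z ↦ (1 + t ^ N) + t ^ m * z) ⁻¹' {w | w ^ d = -t ^ (b * N)} := by
    ext z
    simp [hF, eq_neg_iff_add_eq_zero, add_comm]
  rw [hline, Set.ncard_preimage_affine _ (pow_ne_zero m ht),
    Complex.ncard_pow_eq (by omega) (neg_ne_zero.mpr (pow_ne_zero _ ht))]

/-- With `N = 2m+1`, `d = a+b` and
`F = x^{aN} y^{bN} + (x^N + y^N + x^m y^m z)^d`, for every `t ∈ ℂ`, `t ≠ 0`, the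
set `{z ∈ ℂ : F(1,t,z) = 0}` has exactly `d` elements. -/
theorem stmt_8 (m a b N d : ℕ) (hm : 0 < m) (ha : 0 < a) (hb : 0 < b)
    (hN : N = 2 * m + 1) (hd : d = a + b)
    (F : MvPolynomial (Fin 3) ℂ)
    (hF : F = X 0 ^ (a * N) * X 1 ^ (b * N) +
      (X 0 ^ N + X 1 ^ N + X 0 ^ m * X 1 ^ m * X 2) ^ d)
    (t : ℂ) (ht : t ≠ 0) :
    Set.ncard {z : ℂ | MvPolynomial.eval ![1, t, z] F = 0} = d :=
  stmt_8_general m a b N d ha hd F hF t ht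
end

section
/- Let m, a, b be positive integers, and set N := 2m+1 and d := a+b. Let f(x,y) := x^{aN} y^{bN} + (x^N + y^N + x^m y^m)^d ∈ ℂ[x,y] be the dehomogenization at z = 1 of F(x,y,z) := x^{aN} y^{bN} + (x^N + y^N + x^m y^m z)^d. Then every monomial appearing in f with nonzero coefficient has total degree at least 2md = (N-1)d, and the homogeneous component of f of degree 2md equals x^{md} y^{md}. (Equivalently: the curve F = 0 has multiplicity (N-1)d at the point P = [0:0:1], and its tangent cone at P is the union of the two lines x = 0 and y = 0.) -/
/-!
Write `A = x^N + y^N` and `B = x^m y^m`, homogeneous of degrees `2m + 1` and `2m`, so that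
`f = B^d + (x^{aN} y^{bN} + (A + B)^d - B^d)`. Measuring polynomials by their order as power
series (the least degree of a monomial), `(A + B)^d - B^d` has order at least `2md + 1`, since
`(A + B)^{d+1} - B^{d+1} = (A + B)((A + B)^d - B^d) + A B^d`, and `x^{aN} y^{bN}` has order
`dN > 2md`. Hence `f` is the form `B^d = x^{md} y^{md}` of degree `2md` plus terms of higher order.
-/

open MvPolynomial

namespace MvPowerSeries

variable {σ R : Type*} [CommRing R]

theorem le_order_add_pow_sub_pow {f g : MvPowerSeries σ R} {n : ℕ}
    (hf : (n + 1 : ℕ∞) ≤ f.order) (hg : (n : ℕ∞) ≤ g.order) (d : ℕ) :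
    ((n * d + 1 : ℕ) : ℕ∞) ≤ ((f + g) ^ d - g ^ d).order := by
  induction d with
  | zero => simp
  | succ d ih =>
    have hfg : (n : ℕ∞) ≤ (f + g).order :=
      (le_min (le_self_add.trans hf) hg).trans min_order_le_add
    have hgd : ((n * d : ℕ) : ℕ∞) ≤ (g ^ d).order :=
      calc ((n * d : ℕ) : ℕ∞) = d • (n : ℕ∞) := by push_cast; rw [nsmul_eq_mul]; ring
        _ ≤ d • g.order := nsmul_le_nsmul_right hg d
        _ ≤ (g ^ d).order := le_order_pow d
    rw [show (f + g) ^ (d + 1) - g ^ (d + 1) = (f + g) * ((f + g) ^ d - g ^ d) + f * g ^ d by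
      ring]
    refine (le_min ?_ ?_).trans min_order_le_add
    · calc ((n * (d + 1) + 1 : ℕ) : ℕ∞) = n + ((n * d + 1 : ℕ) : ℕ∞) := by
            push_cast; ring
        _ ≤ _ := (add_le_add hfg ih).trans le_order_mul
    · calc ((n * (d + 1) + 1 : ℕ) : ℕ∞) = (n + 1) + ((n * d : ℕ) : ℕ∞) := by
            push_cast; ring
        _ ≤ _ := (add_le_add hf hgd).trans le_order_mul

end MvPowerSeries

namespace MvPolynomial

variable {σ R : Type*} [CommSemiring R]

theorem le_order_coe_iff {p : MvPolynomial σ R} {n : ℕ} :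
    (n : ℕ∞) ≤ (p : MvPowerSeries σ R).order ↔ ∀ v ∈ p.support, n ≤ v.degree := by
  refine ⟨fun h v hv => ?_, fun h => MvPowerSeries.nat_le_order fun v hv => ?_⟩
  · exact_mod_cast h.trans (MvPowerSeries.order_le (by rwa [coeff_coe, ← mem_support_iff]))
  · rw [coeff_coe, ← notMem_support_iff]
    exact fun hmem => (h v hmem).not_gt hv

theorem IsHomogeneous.le_order_coe {p : MvPolynomial σ R} {n : ℕ} (hp : p.IsHomogeneous n) :
    (n : ℕ∞) ≤ (p : MvPowerSeries σ R).order :=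
  le_order_coe_iff.2 fun v hv => by
    rw [Finsupp.degree_eq_weight_one]
    exact (hp (mem_support_iff.1 hv)).ge

theorem homogeneousComponent_eq_zero_of_lt_order_coe {p : MvPolynomial σ R} {n : ℕ}
    (hp : (n : ℕ∞) < (p : MvPowerSeries σ R).order) : homogeneousComponent n p = 0 := by
  ext v
  rw [coeff_homogeneousComponent, coeff_zero]
  split_ifs with hv
  · rw [← coeff_coe]
    exact MvPowerSeries.coeff_of_lt_order (hv ▸ hp)
  · rfl

theorem homogeneousComponent_add_of_lt_order_coe {p r : MvPolynomial σ R} {n : ℕ}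
    (hp : p.IsHomogeneous n) (hr : (n : ℕ∞) < (r : MvPowerSeries σ R).order) :
    homogeneousComponent n (p + r) = p := by
  rw [map_add, homogeneousComponent_of_mem hp, if_pos rfl,
    homogeneousComponent_eq_zero_of_lt_order_coe hr, add_zero]

theorem le_degree_of_mem_support_add {p r : MvPolynomial σ R} {n : ℕ}
    (hp : p.IsHomogeneous n) (hr : (n : ℕ∞) < (r : MvPowerSeries σ R).order) :
    ∀ v ∈ (p + r).support, n ≤ v.degree :=
  le_order_coe_iff.1 <| by
    rw [coe_add]
    exact (le_min hp.le_order_coe hr.le).trans MvPowerSeries.min_order_le_add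

end MvPolynomial

theorem stmt_9_general (m a b N d : ℕ) (ha : 0 < a)
    (hN : N = 2 * m + 1) (hd : d = a + b)
    (f : MvPolynomial (Fin 2) ℂ)
    (hf : f = X 0 ^ (a * N) * X 1 ^ (b * N) +
      (X 0 ^ N + X 1 ^ N + X 0 ^ m * X 1 ^ m) ^ d) :
    (∀ v ∈ f.support, 2 * m * d ≤ ∑ i, v i) ∧
      MvPolynomial.homogeneousComponent (2 * m * d) f =
        X 0 ^ (m * d) * X 1 ^ (m * d) := by
  set A : MvPolynomial (Fin 2) ℂ := X 0 ^ N + X 1 ^ N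
  set B : MvPolynomial (Fin 2) ℂ := X 0 ^ m * X 1 ^ m
  set T : MvPolynomial (Fin 2) ℂ := X 0 ^ (a * N) * X 1 ^ (b * N)
  have hA : A.IsHomogeneous (2 * m + 1) :=
    hN ▸ (isHomogeneous_X_pow 0 N).add (isHomogeneous_X_pow 1 N)
  have hB : B.IsHomogeneous (2 * m) :=
    two_mul m ▸ (isHomogeneous_X_pow 0 m).mul (isHomogeneous_X_pow 1 m)
  have hT : T.IsHomogeneous (a * N + b * N) :=
    (isHomogeneous_X_pow 0 _).mul (isHomogeneous_X_pow 1 _)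
  have hTdeg : 2 * m * d + 1 ≤ a * N + b * N := by subst hN hd; nlinarith
  have hrest : ((2 * m * d : ℕ) : ℕ∞) <
      ((T + ((A + B) ^ d - B ^ d) : MvPolynomial (Fin 2) ℂ) :
        MvPowerSeries (Fin 2) ℂ).order := by
    simp only [← coeToMvPowerSeries.ringHom_apply, map_add, map_sub, map_pow]
    refine (Nat.cast_lt.2 (Nat.lt_succ_self _)).trans_le
      ((le_min ?_ ?_).trans MvPowerSeries.min_order_le_add)
    · exact (Nat.cast_le.2 hTdeg).trans hT.le_order_coe
    · exact MvPowerSeries.le_order_add_pow_sub_pow (by exact_mod_cast hA.le_order_coe)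
        hB.le_order_coe d
  rw [show f = B ^ d + (T + ((A + B) ^ d - B ^ d)) by rw [hf]; ring]
  refine ⟨fun v hv => ?_, ?_⟩
  · rw [← Finsupp.degree_eq_sum]
    exact le_degree_of_mem_support_add (hB.pow d) hrest v hv
  · rw [homogeneousComponent_add_of_lt_order_coe (hB.pow d) hrest, mul_pow, ← pow_mul,
      ← pow_mul]

/-- With `N = 2m+1`, `d = a+b` and
`f = x^{aN} y^{bN} + (x^N + y^N + x^m y^m)^d ∈ ℂ[x,y]` (the dehomogenization at
`z = 1`), every monomial of `f` with nonzero coefficient has total degree at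
least `2md = (N-1)d`, and the homogeneous component of `f` of degree `2md` is
`x^{md} y^{md}`. (So the curve has multiplicity `(N-1)d` at `P = [0:0:1]` and
its tangent cone there is the union of the lines `x = 0` and `y = 0`.) -/
theorem stmt_9 (m a b N d : ℕ) (hm : 0 < m) (ha : 0 < a) (hb : 0 < b)
    (hN : N = 2 * m + 1) (hd : d = a + b)
    (f : MvPolynomial (Fin 2) ℂ)
    (hf : f = X 0 ^ (a * N) * X 1 ^ (b * N) +
      (X 0 ^ N + X 1 ^ N + X 0 ^ m * X 1 ^ m) ^ d) :
    (∀ v ∈ f.support, 2 * m * d ≤ ∑ i, v i) ∧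
      MvPolynomial.homogeneousComponent (2 * m * d) f =
        X 0 ^ (m * d) * X 1 ^ (m * d) :=
  stmt_9_general m a b N d ha hN hd f hf
end

section
/- Let m, a, b be positive integers, and set N := 2m+1 and d := a+b. Let F(x,y,z) := x^{aN} y^{bN} + (x^N + y^N + x^m y^m z)^d ∈ ℂ[x,y,z]. If (x₀,y₀,z₀) ∈ ℂ³ ∖ {0} is a point at which all three partial derivatives ∂F/∂x, ∂F/∂y, ∂F/∂z vanish, then x₀ = 0 and y₀ = 0. (Equivalently: the point P = [0:0:1] is the only singular point of the projective curve F = 0.) -/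
open MvPolynomial

/-- With `N = 2m+1`, `d = a+b` and
`F = x^{aN} y^{bN} + (x^N + y^N + x^m y^m z)^d`, any point of `ℂ³ ∖ {0}` at which
all three partial derivatives of `F` vanish has `x₀ = 0` and `y₀ = 0`; i.e.
`P = [0:0:1]` is the only singular point of the projective curve `F = 0`. -/
theorem stmt_10 (m a b N d : ℕ) (hm : 0 < m) (ha : 0 < a) (hb : 0 < b)
    (hN : N = 2 * m + 1) (hd : d = a + b)
    (F : MvPolynomial (Fin 3) ℂ)
    (hF : F = X 0 ^ (a * N) * X 1 ^ (b * N) +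
      (X 0 ^ N + X 1 ^ N + X 0 ^ m * X 1 ^ m * X 2) ^ d)
    (x₀ y₀ z₀ : ℂ) (hv : ![x₀, y₀, z₀] ≠ 0)
    (hsing : ∀ i : Fin 3, MvPolynomial.eval ![x₀, y₀, z₀] (MvPolynomial.pderiv i F) = 0) :
    x₀ = 0 ∧ y₀ = 0 := by
  have h0 := hsing 0
  have h1 := hsing 1
  have h2 := hsing 2
  simp only [hF, map_add, pderiv_mul, pderiv_pow, pderiv_X, map_mul, map_pow, Pi.single_apply,
    eval_add, eval_mul, eval_pow, eval_X, eval_C, map_nsmul, smul_eq_mul, map_natCast,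
    Fin.reduceEq, reduceIte, if_true, map_one, map_zero, mul_one, mul_zero, one_mul, zero_mul,
    add_zero, zero_add, Nat.cast_mul,
    Matrix.cons_val_zero, Matrix.cons_val_one, Matrix.head_cons, Matrix.cons_val_two,
    Matrix.tail_cons] at h0 h1 h2
  have hdC : (d : ℂ) ≠ 0 := Nat.cast_ne_zero.mpr (by omega)
  have hNC : (N : ℂ) ≠ 0 := Nat.cast_ne_zero.mpr (by omega)
  -- if x₀ = 0 then y₀ = 0
  have Hx : x₀ = 0 → y₀ = 0 := by
    intro hx
    rw [hx] at h1
    rw [zero_pow (Nat.mul_ne_zero (by omega) (by omega)), zero_pow (show m ≠ 0 by omega), zero_pow (show N ≠ 0 by omega)] at h1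
    simp only [zero_mul, mul_zero, zero_add, add_zero] at h1
    by_contra hy
    exact (mul_ne_zero (mul_ne_zero hdC (pow_ne_zero _ (pow_ne_zero _ hy)))
      (mul_ne_zero hNC (pow_ne_zero _ hy))) h1
  -- if y₀ = 0 then x₀ = 0
  have Hy : y₀ = 0 → x₀ = 0 := by
    intro hy
    rw [hy] at h0
    rw [zero_pow (Nat.mul_ne_zero (by omega) (by omega)), zero_pow (show m ≠ 0 by omega), zero_pow (show N ≠ 0 by omega)] at h0
    simp only [zero_mul, mul_zero, zero_add, add_zero] at h0
    by_contra hx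
    exact (mul_ne_zero (mul_ne_zero hdC (pow_ne_zero _ (pow_ne_zero _ hx)))
      (mul_ne_zero hNC (pow_ne_zero _ hx))) h0
  -- from the z-derivative
  have h2' : ((x₀ ^ N + y₀ ^ N + x₀ ^ m * y₀ ^ m * z₀) ^ (d - 1)) * (x₀ ^ m * y₀ ^ m) = 0 := by
    rw [mul_assoc] at h2
    rcases mul_eq_zero.mp h2 with h | h
    · exact absurd h hdC
    · exact h
  have hxory : x₀ = 0 ∨ y₀ = 0 := by
    rcases mul_eq_zero.mp h2' with hg | hxy
    · -- g = 0
      have hg0 : x₀ ^ N + y₀ ^ N + x₀ ^ m * y₀ ^ m * z₀ = 0 :=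
        pow_eq_zero_iff (show d - 1 ≠ 0 by omega) |>.mp hg
      rw [hg0, zero_pow (show d - 1 ≠ 0 by omega)] at h0
      simp only [mul_zero, zero_mul, add_zero] at h0
      have haC : (a : ℂ) ≠ 0 := Nat.cast_ne_zero.mpr (by omega)
      rcases mul_eq_zero.mp h0 with h | h
      · rcases mul_eq_zero.mp h with h' | h'
        · exact absurd h' (mul_ne_zero haC hNC)
        · exact Or.inl (pow_eq_zero_iff (show a * N - 1 ≠ 0 by
            have : 3 ≤ N := by omega
            have : N ≤ a * N := Nat.le_mul_of_pos_left N ha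
            omega) |>.mp h')
      · exact Or.inr (pow_eq_zero_iff (Nat.mul_ne_zero (by omega) (by omega)) |>.mp h)
    · rcases mul_eq_zero.mp hxy with h | h
      · exact Or.inl (pow_eq_zero_iff (show m ≠ 0 by omega) |>.mp h)
      · exact Or.inr (pow_eq_zero_iff (show m ≠ 0 by omega) |>.mp h)
  rcases hxory with hx | hy
  · exact ⟨hx, Hx hx⟩
  · exact ⟨Hy hy, hy⟩
end
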